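/- Let 𝔤 be a finite-dimensional nonabelian nilpotent real Lie algebra. The following are equivalent: (a) for every inner product ⟨·,·⟩ on 𝔤, the set of geodesics of 𝔤 is exactly the set of nonzero vectors orthogonal to the derived algebra [𝔤,𝔤] together with the nonzero vectors contained in the centre z(𝔤); (b) 𝔤 is 2-step nilpotent (i.e. [[𝔤,𝔤],𝔤] = 0) and for every X ∈ 𝔤 with X ∉ z(𝔤), the adjoint map ad(X) maps 𝔤 onto [𝔤,𝔤]. -/

import Mathlib

/-!
If `ad Y` maps onto `[g, g]` for every non-central `Y`, a geodesic `Y` is central or satisfies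
`⟨Y, [Y, Z]⟩ = -⟨[Z, Y], Y⟩ = 0` for all `Z`, i.e. is orthogonal to `[g, g]`; that central vectors
and vectors orthogonal to `[g, g]` are geodesics holds for every inner product.

Conversely, let `X` be non-central. Nilpotency gives `X ∉ im (ad X)`, so every functional `f`
vanishing on `im (ad X)` with `f X = 1` is `⟨X, ·⟩` for some inner product, and `X` is a geodesic
for it. By (a), every such `f` vanishes on `[g, g]`; these functions span the annihilator of
`im (ad X)`, hence `[g, g] ⊆ im (ad X)`. Finally, a non-central `[x, y]` would lie in
`im (ad [x, y])`, which nilpotency forbids, so `g` is 2-step nilpotent.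
-/

open LieAlgebra

theorem LieModule.eq_zero_of_lie_eq_self {L M : Type*} [LieRing L] [AddCommGroup M]
    [LieRingModule L M] [LieModule.IsNilpotent L M] {x : L} {m : M} (h : ⁅x, m⁆ = m) :
    m = 0 := by
  obtain ⟨k, hk⟩ := LieModule.IsNilpotent.nilpotent ℤ L M
  have hfix : (LieModule.toEnd ℤ L M x)^[k] m = m := Function.iterate_fixed h k
  simpa [hfix, hk] using LieModule.iterate_toEnd_mem_lowerCentralSeries ℤ L M x m k

theorem Submodule.mem_of_forall_dual_eq_zero {K V : Type*} [Field K] [AddCommGroup V]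
    [Module K V] {p : Submodule K V} {x w : V} (hx : x ∉ p)
    (h : ∀ f : Module.Dual K V, (∀ v ∈ p, f v = 0) → f x = 1 → f w = 0) : w ∈ p := by
  by_contra hw
  obtain ⟨φ, hφx, hφp⟩ := p.exists_dual_map_eq_bot_of_notMem hx inferInstance
  obtain ⟨ψ, hψw, hψp⟩ := p.exists_dual_map_eq_bot_of_notMem hw inferInstance
  rw [← LinearMap.le_ker_iff_map, SetLike.le_def] at hφp hψp
  set f := (φ x)⁻¹ • φ
  have hfp : ∀ v ∈ p, f v = 0 := fun v hv => by simp [f, LinearMap.mem_ker.mp (hφp hv)]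
  have hfx : f x = 1 := by simp [f, hφx]
  have hfw := h f hfp hfx
  have hψ := h (f + ψ - ψ x • f)
    (fun v hv => by simp [hfp v hv, LinearMap.mem_ker.mp (hψp hv)]) (by simp [hfx])
  simp only [LinearMap.sub_apply, LinearMap.add_apply, LinearMap.smul_apply, hfw,
    smul_eq_mul, mul_zero, zero_add, sub_zero] at hψ
  exact hψw hψ

section InnerProduct

variable {V : Type*} [AddCommGroup V] [Module ℝ V] [FiniteDimensional ℝ V]

theorem exists_symm_posDef_bilin :
    ∃ B : V →ₗ[ℝ] V →ₗ[ℝ] ℝ, (∀ x y, B x y = B y x) ∧ ∀ x, x ≠ 0 → 0 < B x x := by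
  let e : V ≃ₗ[ℝ] EuclideanSpace ℝ (Fin (Module.finrank ℝ V)) :=
    LinearEquiv.ofFinrankEq _ _ (by simp)
  refine ⟨(innerₗ _).compl₁₂ e.toLinearMap e.toLinearMap, fun x y => ?_, fun x hx => ?_⟩
  · simpa using real_inner_comm (e y) (e x)
  · simpa using real_inner_self_pos.mpr (e.map_ne_zero_iff.mpr hx)

theorem exists_symm_posDef_bilin_apply_eq {y : V} {f : Module.Dual ℝ V} (hfy : f y = 1) :
    ∃ B : V →ₗ[ℝ] V →ₗ[ℝ] ℝ,
      (∀ x y, B x y = B y x) ∧ (∀ x, x ≠ 0 → 0 < B x x) ∧ B y = f := by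
  obtain ⟨B₀, hB₀s, hB₀p⟩ := exists_symm_posDef_bilin (V := V)
  -- `P` is the projection onto `ker f` along `y`, and `B x z = f x * f z + B₀ (P x) (P z)`.
  let P : V →ₗ[ℝ] V := LinearMap.id - f.smulRight y
  have hPy : P y = 0 := by simp [P, hfy]
  refine ⟨B₀.compl₁₂ P P + f.smulRight f, fun x z => ?_, fun x hx => ?_, ?_⟩
  · simp [hB₀s (P x), mul_comm]
  · have hB₀nonneg : 0 ≤ B₀ (P x) (P x) := by
      by_cases hPx : P x = 0
      · simp [hPx]
      · exact (hB₀p _ hPx).le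
    by_cases hfx : f x = 0
    · have hPx : P x = x := by simp [P, hfx]
      simpa [hPx, hfx] using hB₀p x hx
    · simp only [LinearMap.add_apply, LinearMap.compl₁₂_apply, LinearMap.smulRight_apply,
        LinearMap.smul_apply, smul_eq_mul]
      nlinarith [mul_self_pos.mpr hfx]
  · ext z
    simp [hPy, hfy]

end InnerProduct

section Geodesic

variable {R L : Type*} [CommRing R] [LieRing L] [LieAlgebra R L]

theorem lie_mem_derivedSeries_one (x y : L) : ⁅x, y⁆ ∈ derivedSeries R L 1 := by
  rw [derivedSeries_def, derivedSeriesOfIdeal_succ, derivedSeriesOfIdeal_zero]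
  exact LieSubmodule.lie_mem_lie (LieSubmodule.mem_top x) (LieSubmodule.mem_top y)

-- A geodesic in the paper's sense is a nonzero `Y` with this property.
def IsGeodesic (B : L →ₗ[R] L →ₗ[R] R) (Y : L) : Prop :=
  ∀ X : L, B ⁅X, Y⁆ Y = 0

theorem isGeodesic_iff_of_exists_lie_eq {B : L →ₗ[R] L →ₗ[R] R} (hB : ∀ x y, B x y = B y x)
    {Y : L} (hY : Y ∉ center R L → ∀ W ∈ derivedSeries R L 1, ∃ Z, ⁅Y, Z⁆ = W) :
    IsGeodesic B Y ↔ (∀ W ∈ derivedSeries R L 1, B Y W = 0) ∨ Y ∈ center R L := by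
  refine ⟨fun hgeo => or_iff_not_imp_right.mpr fun hc W hW => ?_, ?_⟩
  · obtain ⟨Z, rfl⟩ := hY hc W hW
    rw [hB, ← lie_skew, map_neg, LinearMap.neg_apply, hgeo, neg_zero]
  · rintro (horth | hc) X
    · rw [hB]
      exact horth _ (lie_mem_derivedSeries_one X Y)
    · rw [(LieModule.mem_maxTrivSubmodule R L L Y).mp hc X, map_zero, LinearMap.zero_apply]

theorem lie_lie_eq_zero_of_exists_lie_eq [LieRing.IsNilpotent L]
    (h : ∀ X ∉ center R L, ∀ W ∈ derivedSeries R L 1, ∃ Z, ⁅X, Z⁆ = W) (x y z : L) :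
    ⁅⁅x, y⁆, z⁆ = 0 := by
  by_cases hc : ⁅x, y⁆ ∈ center R L
  · rw [← lie_skew, (LieModule.mem_maxTrivSubmodule R L L _).mp hc z, neg_zero]
  · obtain ⟨Z, hZ⟩ := h _ hc _ (lie_mem_derivedSeries_one x y)
    have hxy : ⁅x, y⁆ = 0 :=
      LieModule.eq_zero_of_lie_eq_self (x := -Z) (by rw [neg_lie, lie_skew, hZ])
    rw [hxy, zero_lie]

theorem exists_lie_eq_of_forall_isGeodesic [LieAlgebra ℝ L] [FiniteDimensional ℝ L]
    [LieRing.IsNilpotent L] {X : L} (hX : X ≠ 0)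
    (h : ∀ B : L →ₗ[ℝ] L →ₗ[ℝ] ℝ, (∀ x y, B x y = B y x) → (∀ x, x ≠ 0 → 0 < B x x) →
      IsGeodesic B X → ∀ W ∈ derivedSeries ℝ L 1, B X W = 0) :
    ∀ W ∈ derivedSeries ℝ L 1, ∃ Z, ⁅X, Z⁆ = W := by
  intro W hW
  have hX_notMem : X ∉ LinearMap.range (ad ℝ L X) := by
    rintro ⟨Z, hZ⟩
    rw [ad_apply] at hZ
    exact hX (LieModule.eq_zero_of_lie_eq_self (x := -Z) (by rw [neg_lie, lie_skew, hZ]))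
  refine Submodule.mem_of_forall_dual_eq_zero hX_notMem fun f hf hfX => ?_
  obtain ⟨B, hs, hp, rfl⟩ := exists_symm_posDef_bilin_apply_eq hfX
  refine h B hs hp (fun Z => ?_) W hW
  rw [hs]
  exact hf _ ⟨-Z, by rw [ad_apply, lie_neg, lie_skew]⟩

end Geodesic

theorem geodesics_exactly_orthogonal_or_central_iff_general
    (g : Type*) [LieRing g] [LieAlgebra ℝ g] [FiniteDimensional ℝ g]
    [LieRing.IsNilpotent g] :
    (∀ B : g →ₗ[ℝ] g →ₗ[ℝ] ℝ,
      (∀ x y : g, B x y = B y x) → (∀ x : g, x ≠ 0 → 0 < B x x) →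
      ∀ Y : g, Y ≠ 0 →
        ((∀ X : g, B ⁅X, Y⁆ Y = 0) ↔
          ((∀ W ∈ LieAlgebra.derivedSeries ℝ g 1, B Y W = 0) ∨
            Y ∈ LieAlgebra.center ℝ g))) ↔
    ((∀ x y z : g, ⁅⁅x, y⁆, z⁆ = 0) ∧
      ∀ X : g, X ∉ LieAlgebra.center ℝ g →
        ∀ W ∈ LieAlgebra.derivedSeries ℝ g 1, ∃ Z : g, ⁅X, Z⁆ = W) := by
  constructor
  · intro hA
    have hsurj : ∀ X ∉ center ℝ g, ∀ W ∈ derivedSeries ℝ g 1, ∃ Z, ⁅X, Z⁆ = W := by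
      intro X hX
      have hX0 : X ≠ 0 := fun h => hX (h ▸ (center ℝ g).zero_mem)
      exact exists_lie_eq_of_forall_isGeodesic hX0 fun B hs hp hgeo =>
        ((hA B hs hp X hX0).mp hgeo).resolve_right hX
    exact ⟨lie_lie_eq_zero_of_exists_lie_eq hsurj, hsurj⟩
  · rintro ⟨-, hsurj⟩ B hs - Y -
    exact isGeodesic_iff_of_exists_lie_eq hs (hsurj Y)

/-- For a nonabelian finite-dimensional nilpotent real Lie algebra `g`, the
following are equivalent: (a) for every inner product, the geodesics are exactly the
nonzero vectors orthogonal to `[g,g]` together with the nonzero central vectors; (b) `g` is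
2-step nilpotent and `ad X` is onto `[g,g]` for every non-central `X`. -/
theorem geodesics_exactly_orthogonal_or_central_iff
    (g : Type*) [LieRing g] [LieAlgebra ℝ g] [FiniteDimensional ℝ g]
    [LieRing.IsNilpotent g]
    (hnonab : ¬ IsLieAbelian g) :
    (∀ B : g →ₗ[ℝ] g →ₗ[ℝ] ℝ,
      (∀ x y : g, B x y = B y x) → (∀ x : g, x ≠ 0 → 0 < B x x) →
      ∀ Y : g, Y ≠ 0 →
        ((∀ X : g, B ⁅X, Y⁆ Y = 0) ↔
          ((∀ W ∈ LieAlgebra.derivedSeries ℝ g 1, B Y W = 0) ∨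
            Y ∈ LieAlgebra.center ℝ g))) ↔
    ((∀ x y z : g, ⁅⁅x, y⁆, z⁆ = 0) ∧
      ∀ X : g, X ∉ LieAlgebra.center ℝ g →
        ∀ W ∈ LieAlgebra.derivedSeries ℝ g 1, ∃ Z : g, ⁅X, Z⁆ = W) :=
  geodesics_exactly_orthogonal_or_central_iff_general g
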